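/- Let n = s·(r·L + M) + L₀ with 0 ≤ M ≤ r−1, 0 ≤ L₀ ≤ s−1, and L ≥ 1. Then, as rational numbers, d_n = (1/(12k)) · (L+1) · (2r²L² + (r² + 6Mr + 3kr + 6r)·L + 6M² + (6k+12)·M + 12k) + (1/(2k)) · Σ_{j=0}^{k−1} (⌊(L−j)/k⌋ + 1) · ((k−2)·((r·j + M) mod k) − ((r·j + M) mod k)²), where ⌊(L−j)/k⌋ denotes the floor of the integer (L−j) divided by k. -/
import Mathlib
open Finset

lemma mem_facts (s k r L M L₀ a b c e : ℕ) (hs : 0 < s) (hM : M < r)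
    (hL₀ : L₀ < s) (h : a + s * b + k * s * c + r * s * e = s * (r * L + M) + L₀) :
    e ≤ L ∧ a = s * (a / s) + L₀ ∧ a / s + b + k * c + r * e = r * L + M := by
  have e1 : s * (b + k * c + r * e) = s * b + k * s * c + r * s * e := by ring
  have e2 : a + s * (b + k * c + r * e) = s * (r * L + M) + L₀ := by omega
  have ha : a % s = L₀ := by
    have h3 := Nat.add_mul_mod_self_left a s (b + k * c + r * e)
    rw [e2] at h3
    have h4 : s * (r * L + M) + L₀ = L₀ + s * (r * L + M) := by omega
    rw [h4, Nat.add_mul_mod_self_left, Nat.mod_eq_of_lt hL₀] at h3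
    omega
  have hdm := Nat.div_add_mod a s
  generalize hts : a / s = t at hdm ⊢
  have had : a = s * t + L₀ := by omega
  have e3 : s * (t + b + k * c + r * e) = s * t + s * (b + k * c + r * e) := by ring
  have e4 : s * (t + b + k * c + r * e) = s * (r * L + M) := by omega
  have e5 : t + b + k * c + r * e = r * L + M := Nat.eq_of_mul_eq_mul_left hs e4
  have h1 : r * e ≤ r * L + M := by omega
  have hlt : r * e < r * (L + 1) := by
    have h4 : r * (L + 1) = r * L + r := by ring
    rw [h4]; omega
  exact ⟨Nat.lt_succ_iff.mp (Nat.lt_of_mul_lt_mul_left hlt), had, e5⟩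

lemma count_card (s k r L M L₀ : ℕ) (hs : 0 < s) (hk : 0 < k) (hM : M < r) (hL₀ : L₀ < s) :
    Nat.card {q : ℕ × ℕ × ℕ × ℕ //
        q.1 + s * q.2.1 + k * s * q.2.2.1 + r * s * q.2.2.2 = s * (r * L + M) + L₀}
      = ∑ e ∈ Finset.range (L+1), ∑ c ∈ Finset.range ((r*(L-e)+M)/k + 1),
          (r*(L-e)+M - k*c + 1) := by
  have hre : ∀ e : ℕ, e ≤ L → r * (L - e) + r * e = r * L := by
    intro e he; rw [← Nat.mul_add]; congr 1; omega
  have key : (Σ (e : Fin (L+1)), Σ (c : Fin ((r*(L-(e:ℕ))+M)/k + 1)),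
      Fin (r*(L-(e:ℕ))+M - k*(c:ℕ) + 1)) ≃
      {q : ℕ × ℕ × ℕ × ℕ //
        q.1 + s * q.2.1 + k * s * q.2.2.1 + r * s * q.2.2.2 = s * (r * L + M) + L₀} := by
    refine ⟨fun x => ⟨(L₀ + s * x.2.2, r*(L-(x.1:ℕ))+M - k*(x.2.1:ℕ) - x.2.2, x.2.1, x.1), ?_⟩,
      fun q => ⟨⟨q.1.2.2.2, ?_⟩, ⟨⟨q.1.2.2.1, ?_⟩, ⟨q.1.1 / s, ?_⟩⟩⟩, ?_, ?_⟩
    · -- toFun property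
      obtain ⟨⟨e, he⟩, ⟨c, hc⟩, ⟨t, ht⟩⟩ := x
      simp only [Fin.val_mk] at hc ht ⊢
      have he' : e ≤ L := Nat.lt_succ_iff.mp he
      have hkc : k * c ≤ r * (L - e) + M := by
        have h' := (Nat.le_div_iff_mul_le hk).mp (Nat.lt_succ_iff.mp hc)
        rw [Nat.mul_comm] at h'
        exact h'
      have hB : t + (r*(L-e)+M - k*c - t) + k*c = r*(L-e)+M := by omega
      have e1 : L₀ + s*t + s*(r*(L-e)+M - k*c - t) + k*s*c + r*s*e
          = L₀ + s*(t + (r*(L-e)+M - k*c - t) + k*c + r*e) := by ring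
      have e2 : t + (r*(L-e)+M - k*c - t) + k*c + r*e = r*L + M := by
        have := hre e he'; omega
      rw [e1, e2]
      omega
    · exact Nat.lt_succ_iff.mpr (mem_facts s k r L M L₀ _ _ _ _ hs hM hL₀ q.2).1
    · obtain ⟨he, -, he5⟩ := mem_facts s k r L M L₀ _ _ _ _ hs hM hL₀ q.2
      have hkc : k * q.1.2.2.1 ≤ r * (L - q.1.2.2.2) + M := by
        have h1 := hre _ he
        generalize q.1.1 / s = t at he5
        omega
      simp only [Fin.val_mk]
      refine Nat.lt_succ_iff.mpr ((Nat.le_div_iff_mul_le hk).mpr ?_)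
      rw [Nat.mul_comm]
      exact hkc
    · obtain ⟨he, -, he5⟩ := mem_facts s k r L M L₀ _ _ _ _ hs hM hL₀ q.2
      have h1 := hre _ he
      simp only [Fin.val_mk]
      generalize q.1.1 / s = t at he5 ⊢
      omega
    · -- left inverse
      rintro ⟨⟨e, he⟩, ⟨c, hc⟩, ⟨t, ht⟩⟩
      have h1 : (L₀ + s * t) / s = t := by
        rw [Nat.add_mul_div_left _ _ hs, Nat.div_eq_of_lt hL₀]
        omega
      simp only [h1]
    · -- right inverse
      rintro ⟨⟨a, b, c, e⟩, h⟩
      dsimp only at h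
      obtain ⟨he, had, he5⟩ := mem_facts s k r L M L₀ a b c e hs hM hL₀ h
      have h1 := hre _ he
      apply Subtype.ext
      dsimp only
      simp only [Prod.mk.injEq, Fin.val_mk]
      refine ⟨by omega, ?_, trivial⟩
      generalize a / s = t at he5 had ⊢
      omega
  rw [← Nat.card_congr key, Nat.card_eq_fintype_card]
  simp only [Fintype.card_sigma, Fintype.card_fin]
  rw [Fin.sum_univ_eq_sum_range (fun e => ∑ c : Fin ((r*(L-e)+M)/k + 1), (r*(L-e)+M - k*(c:ℕ) + 1))]
  refine Finset.sum_congr rfl fun e _ => ?_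
  rw [Fin.sum_univ_eq_sum_range (fun c => r*(L-e)+M - k*c + 1)]


lemma sum_arith (k A : ℕ) : ∀ q : ℕ, k * q ≤ A →
    ((∑ c ∈ Finset.range (q+1), (A - k*c + 1) : ℕ) : ℚ)
      = ((q:ℚ)+1)*((A:ℚ)+1) - (k:ℚ)*(q:ℚ)*((q:ℚ)+1)/2 := by
  intro q
  induction q with
  | zero => intro _; simp
  | succ n ih =>
    intro hq
    have hn : k * n ≤ A := le_trans (Nat.mul_le_mul_left k (Nat.le_succ n)) hq
    rw [Finset.sum_range_succ, Nat.cast_add, ih hn]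
    have h2 : ((A - k*(n+1) + 1 : ℕ) : ℚ) = (A:ℚ) - (k:ℚ)*((n:ℚ)+1) + 1 := by
      push_cast [Nat.cast_sub hq]
      ring
    rw [h2]; push_cast; ring

lemma inner_eval (k N : ℕ) (hk : 0 < k) :
    ((∑ c ∈ Finset.range (N/k + 1), (N - k*c + 1) : ℕ) : ℚ)
      = (1/(2*(k:ℚ))) * ((N:ℚ)^2 + ((k:ℚ)+2)*(N:ℚ) + 2*(k:ℚ)
          + ((k:ℚ)-2)*((N % k : ℕ):ℚ) - ((N % k : ℕ):ℚ)^2) := by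
  have hdm : k * (N / k) + N % k = N := Nat.div_add_mod N k
  have h1 : k * (N / k) ≤ N := by omega
  rw [sum_arith k N (N/k) h1]
  have hN : (N:ℚ) = (k:ℚ)*((N/k : ℕ):ℚ) + ((N % k : ℕ):ℚ) := by exact_mod_cast hdm.symm
  rw [hN]
  have hk' : (k:ℚ) ≠ 0 := Nat.cast_ne_zero.mpr hk.ne'
  field_simp
  ring

lemma poly_sum (k r M : ℕ) : ∀ L : ℕ,
    (∑ m ∈ Finset.range (L+1), (((r*m+M : ℕ):ℚ)^2 + ((k:ℚ)+2)*((r*m+M : ℕ):ℚ) + 2*(k:ℚ)))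
      = (1/6)*((L:ℚ)+1)*(2*(r:ℚ)^2*(L:ℚ)^2 + ((r:ℚ)^2+6*(M:ℚ)*(r:ℚ)+3*(k:ℚ)*(r:ℚ)+6*(r:ℚ))*(L:ℚ)
          + 6*(M:ℚ)^2+(6*(k:ℚ)+12)*(M:ℚ)+12*(k:ℚ)) := by
  intro L
  induction L with
  | zero => rw [Finset.sum_range_one]; push_cast; ring
  | succ n ih =>
    rw [Finset.sum_range_succ, ih]
    push_cast
    ring

lemma card_residue (k L j : ℕ) (hk : 0 < k) (hj : j < k) :
    ((Finset.filter (fun m => m % k = j) (Finset.range (L+1))).card : ℚ)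
      = ((((L:ℤ)-(j:ℤ))/(k:ℤ) : ℤ) : ℚ) + 1 := by
  rcases le_or_gt j L with hjL | hjL
  · have himg : Finset.filter (fun m => m % k = j) (Finset.range (L+1))
        = Finset.image (fun t => j + k*t) (Finset.range ((L-j)/k + 1)) := by
      ext m
      simp only [mem_filter, mem_range, mem_image]
      constructor
      · rintro ⟨hm, hmod⟩
        refine ⟨m / k, ?_, ?_⟩
        · have h1 : k * (m/k) + j = m := by
            conv_rhs => rw [← Nat.div_add_mod m k]
            omega
          have h2 : (m/k) * k ≤ L - j := by rw [Nat.mul_comm]; omega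
          have h3 : m/k ≤ (L-j)/k := (Nat.le_div_iff_mul_le hk).mpr h2
          omega
        · have h1 := Nat.div_add_mod m k; omega
      · rintro ⟨t, ht, rfl⟩
        have h1 : t ≤ (L-j)/k := by omega
        have h2 : k * t ≤ L - j := by
          have h3 := Nat.div_mul_le_self (L-j) k
          have h4 : t * k ≤ (L-j)/k * k := Nat.mul_le_mul_right k h1
          rw [Nat.mul_comm]; omega
        refine ⟨by omega, ?_⟩
        rw [Nat.add_mul_mod_self_left, Nat.mod_eq_of_lt hj]
    rw [himg, Finset.card_image_of_injective _
        (fun t1 t2 h => Nat.eq_of_mul_eq_mul_left hk (by omega)), Finset.card_range]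
    have hcast : ((L:ℤ) - (j:ℤ)) = ((L - j : ℕ) : ℤ) := by omega
    rw [hcast, ← Int.natCast_div]
    norm_cast
  · have hemp : Finset.filter (fun m => m % k = j) (Finset.range (L+1)) = ∅ := by
      refine Finset.filter_eq_empty_iff.mpr fun m hm => ?_
      have hmL : m < L + 1 := Finset.mem_range.mp hm
      have h2 : m % k ≤ m := Nat.mod_le m k
      omega
    rw [hemp]
    simp only [Finset.card_empty, Nat.cast_zero]
    have hk' : (k:ℤ) ≠ 0 := by exact_mod_cast hk.ne'
    have h1 : ((L:ℤ) - j + 1*(k:ℤ)) / k = ((L:ℤ)-j)/k + 1 := Int.add_mul_ediv_right _ 1 hk'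
    have h2 : ((L:ℤ) - j + 1*(k:ℤ)) / k = 0 :=
      Int.ediv_eq_zero_of_lt (by push_cast; omega) (by push_cast; omega)
    have h3 : ((L:ℤ)-j)/k + 1 = 0 := h1.symm.trans h2
    have h4 : ((L:ℤ)-j)/k = -1 := by linarith
    rw [h4]; norm_num

lemma mod_sum (k r M L : ℕ) (hk : 0 < k) :
    (∑ m ∈ Finset.range (L+1),
        (((k:ℚ)-2)*(((r*m+M) % k : ℕ):ℚ) - ((((r*m+M) % k : ℕ)):ℚ)^2))
      = ∑ j ∈ Finset.range k, (((((L:ℤ)-(j:ℤ))/(k:ℤ) : ℤ):ℚ)+1)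
          * (((k:ℚ)-2)*(((r*j+M) % k : ℕ):ℚ) - ((((r*j+M) % k : ℕ)):ℚ)^2) := by
  set G : ℕ → ℚ := fun x => ((k:ℚ)-2)*(((r*x+M) % k : ℕ):ℚ) - ((((r*x+M) % k : ℕ)):ℚ)^2 with hG
  have hGmod : ∀ m : ℕ, G m = G (m % k) := by
    intro m
    have h2 : (r*(m % k)+M) % k = (r*m+M) % k := ((Nat.mod_modEq m k).mul_left r).add_right M
    simp only [hG, h2]
  have step1 : (∑ m ∈ Finset.range (L+1), G m) = ∑ m ∈ Finset.range (L+1), G (m % k) :=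
    Finset.sum_congr rfl fun m _ => hGmod m
  rw [step1, Finset.sum_comp G (fun m => m % k)]
  rw [Finset.sum_subset (fun x hx => ?_) (fun j hj hnot => ?_)]
  · refine Finset.sum_congr rfl fun j hj => ?_
    rw [nsmul_eq_mul, card_residue k L j hk (Finset.mem_range.mp hj)]
  · obtain ⟨m, _, rfl⟩ := Finset.mem_image.mp hx
    exact Finset.mem_range.mpr (Nat.mod_lt m hk)
  · have hfil : Finset.filter (fun m => m % k = j) (Finset.range (L+1)) = ∅ :=
      Finset.filter_eq_empty_iff.mpr fun m hm hmj => hnot (Finset.mem_image.mpr ⟨m, hm, hmj⟩)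
    rw [hfil]
    simp



/-- Exact formula for the number `d_n` of ways to make change of
`n = s·(r·L + M) + L₀` cents using the coin set `{1, s, k·s, r·s}`. -/
theorem change_four_coins_formula (s k r : ℕ) (hs : 2 ≤ s) (hk : 2 ≤ k) (hr : 2 ≤ r)
    (hkr : k < r) (n L M L₀ : ℕ) (hL : 1 ≤ L) (hM : M ≤ r - 1) (hL₀ : L₀ ≤ s - 1)
    (hn : n = s * (r * L + M) + L₀) :
    (Nat.card {q : ℕ × ℕ × ℕ × ℕ //
        q.1 + s * q.2.1 + k * s * q.2.2.1 + r * s * q.2.2.2 = n} : ℚ)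
      = (1 / (12 * (k : ℚ))) * ((L : ℚ) + 1) *
          (2 * (r : ℚ) ^ 2 * (L : ℚ) ^ 2
            + ((r : ℚ) ^ 2 + 6 * (M : ℚ) * (r : ℚ) + 3 * (k : ℚ) * (r : ℚ) + 6 * (r : ℚ))
                * (L : ℚ)
            + 6 * (M : ℚ) ^ 2 + (6 * (k : ℚ) + 12) * (M : ℚ) + 12 * (k : ℚ))
        + (1 / (2 * (k : ℚ))) *
            ∑ j ∈ Finset.range k,
              (((((L : ℤ) - (j : ℤ)) / (k : ℤ) : ℤ) : ℚ) + 1) *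
                (((k : ℚ) - 2) * (((r * j + M) % k : ℕ) : ℚ)
                  - (((r * j + M) % k : ℕ) : ℚ) ^ 2) := by

  have hs0 : 0 < s := by omega
  have hk0 : 0 < k := by omega
  have hM' : M < r := by omega
  have hL₀' : L₀ < s := by omega
  subst hn
  rw [count_card s k r L M L₀ hs0 hk0 hM' hL₀', Nat.cast_sum]
  have step1 : ∀ e ∈ Finset.range (L+1),
      ((∑ c ∈ Finset.range ((r*(L-e)+M)/k + 1), (r*(L-e)+M - k*c + 1) : ℕ) : ℚ)
        = (1/(2*(k:ℚ))) * (((r*(L-e)+M : ℕ):ℚ)^2 + ((k:ℚ)+2)*((r*(L-e)+M : ℕ):ℚ) + 2*(k:ℚ)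
            + ((k:ℚ)-2)*(((r*(L-e)+M) % k : ℕ):ℚ) - (((r*(L-e)+M) % k : ℕ):ℚ)^2) :=
    fun e _ => inner_eval k (r*(L-e)+M) hk0
  rw [Finset.sum_congr rfl step1]
  have refl1 := Finset.sum_range_reflect (fun m =>
      (1/(2*(k:ℚ))) * (((r*m+M : ℕ):ℚ)^2 + ((k:ℚ)+2)*((r*m+M : ℕ):ℚ) + 2*(k:ℚ)
        + ((k:ℚ)-2)*(((r*m+M) % k : ℕ):ℚ) - (((r*m+M) % k : ℕ):ℚ)^2)) (L+1)
  simp only [Nat.add_sub_cancel] at refl1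
  rw [refl1]
  have split : ∀ m ∈ Finset.range (L+1),
      (1/(2*(k:ℚ))) * (((r*m+M : ℕ):ℚ)^2 + ((k:ℚ)+2)*((r*m+M : ℕ):ℚ) + 2*(k:ℚ)
        + ((k:ℚ)-2)*(((r*m+M) % k : ℕ):ℚ) - (((r*m+M) % k : ℕ):ℚ)^2)
      = (1/(2*(k:ℚ))) * (((r*m+M : ℕ):ℚ)^2 + ((k:ℚ)+2)*((r*m+M : ℕ):ℚ) + 2*(k:ℚ))
        + (1/(2*(k:ℚ))) * (((k:ℚ)-2)*(((r*m+M) % k : ℕ):ℚ) - (((r*m+M) % k : ℕ):ℚ)^2) :=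
    fun m _ => by ring
  rw [Finset.sum_congr rfl split, Finset.sum_add_distrib, ← Finset.mul_sum, ← Finset.mul_sum,
    poly_sum k r M L, mod_sum k r M L hk0]
  have hk' : (k:ℚ) ≠ 0 := Nat.cast_ne_zero.mpr hk0.ne'
  field_simp
  ring
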